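/- Fix positive integers a_1,...,a_n and define γ_n(l) as before. Write m = 2l + r_0 with r_0 ∈ {0,1}, and define Γ_n(m,i) = Σ_{j=0}^{min(m-1, 2i - r_0)} (-1)^j γ_n(m-1-j) γ_{2i - r_0}(j). Then for all 1 ≤ m ≤ n (n even), γ_n(m) = Σ_{i=r_0}^{(n-m+r_0)/2} a_{2i+1-r_0} · Γ_n(m,i). -/

import Mathlib

/-- `gamma a n l` = Σ over strictly increasing sequences `t : Fin l → {1,...,n}` with
`t i ≡ n + i - l (mod 2)` (1-indexed) of the products `a (t 1) ⋯ a (t l)`. -/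
def gamma (a : ℕ → ℤ) (n l : ℕ) : ℤ :=
  ∑ t ∈ Finset.univ.filter (fun t : Fin l → Fin n =>
      (∀ i j : Fin l, i < j → t i < t j) ∧
      (∀ i : Fin l, ((t i : ℕ) + 1 + l) % 2 = (n + ((i : ℕ) + 1)) % 2)),
    ∏ i : Fin l, a ((t i : ℕ) + 1)

/-- `Γ_n(m,i) = Σ_{j=0}^{min(m-1, 2i-r₀)} (-1)^j γ_n(m-1-j) γ_{2i-r₀}(j)`
where `m = 2l + r₀`, `r₀ ∈ {0,1}`. -/
def GammaBig (a : ℕ → ℤ) (n m i : ℕ) : ℤ :=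
  ∑ j ∈ Finset.range (min (m - 1) (2 * i - m % 2) + 1),
    (-1) ^ j * gamma a n (m - 1 - j) * gamma a (2 * i - m % 2) j

def g (a : ℕ → ℤ) : ℕ → ℕ → ℤ
  | _, 0 => 1
  | 0, _+1 => 0
  | n+1, l+1 => a (n+1) * g a n l + g a (n-1) (l+1)
termination_by n _ => n
decreasing_by all_goals omega
@[simp] lemma g_zero (a : ℕ → ℤ) (n : ℕ) : g a n 0 = 1 := by cases n <;> simp [g]
@[simp] lemma g_zero_left (a : ℕ → ℤ) (l : ℕ) : g a 0 (l+1) = 0 := by simp [g]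
lemma g_succ (a : ℕ → ℤ) (n l : ℕ) :
    g a (n+1) (l+1) = a (n+1) * g a n l + g a (n-1) (l+1) := by rw [g]
lemma g_eq_zero_of_lt (a : ℕ → ℤ) : ∀ n l, n < l → g a n l = 0 := by
  intro n
  induction n using Nat.strong_induction_on with
  | _ n ih =>
    intro l hl
    match n, l with
    | 0, l+1 => simp
    | n+1, l+1 =>
      rw [g_succ, ih n (by omega) l (by omega), ih (n-1) (by omega) (l+1) (by omega)]
      ring

lemma gB1 (A : ℕ → ℤ) : ∀ N q, (N + q) % 2 = 1 →
    g A N q = g (fun x => A (x+1)) (N-1) q := by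
  intro N
  induction N using Nat.strong_induction_on with
  | _ N ih =>
    intro q hpar
    match q with
    | 0 => simp
    | q+1 =>
      match N with
      | 0 => simp
      | 1 =>
        rw [g_eq_zero_of_lt A 1 (q+1) (by omega), g_eq_zero_of_lt _ 0 (q+1) (by omega)]
      | 2 =>
        match q with
        | 0 =>
          rw [g_succ, g_succ]; simp
        | q+1 =>
          rw [g_eq_zero_of_lt A 2 (q+2) (by omega), g_eq_zero_of_lt _ 1 (q+2) (by omega)]
      | (M+3) =>
        rw [g_succ]
        have h1 := ih (M+2) (by omega) q (by omega)
        have h2 := ih (M+1) (by omega) (q+1) (by omega)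
        simp only [show M+2-1 = M+1 by rfl, show M+3-1 = M+2 by rfl, show M+1-1 = M by rfl] at h1 h2 ⊢
        rw [h1, h2]
        show _ = g _ (M+1+1) (q+1)
        rw [g_succ]
        try simp only [show M+1-1 = M by rfl]
        try ring

lemma gB1' (A : ℕ → ℤ) : ∀ N q, (N + q) % 2 = 0 → 1 ≤ q →
    g A N q = A 1 * g (fun x => A (x+1)) (N-1) (q-1) + g (fun x => A (x+1)) (N-1) q := by
  intro N
  induction N using Nat.strong_induction_on with
  | _ N ih =>
    intro q hpar hq
    match N, q with
    | 0, q+1 =>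
      simp only [Nat.zero_sub, Nat.add_sub_cancel]
      rw [g_eq_zero_of_lt _ 0 (q+1) (by omega), g_eq_zero_of_lt _ 0 (q+1) (by omega),
        g_eq_zero_of_lt _ 0 q (by omega)]
      ring
    | 1, 1 => rw [g_succ]; simp
    | 1, q+2 =>
      simp only [show (1:ℕ)-1 = 0 by rfl, show q+2-1 = q+1 by rfl]
      rw [g_eq_zero_of_lt _ 1 (q+2) (by omega), g_eq_zero_of_lt _ 0 (q+2) (by omega),
        g_eq_zero_of_lt _ 0 (q+1) (by omega)]
      ring
    | 2, 2 =>
      simp only [show (2:ℕ)-1 = 1 by rfl]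
      conv_rhs => rw [show (1:ℕ) = 0+1 by rfl, show (2:ℕ) = 1+1 by rfl, g_succ, g_succ]
      rw [g_succ, g_succ]
      simp [g_succ]
      ring
    | 2, q+3 =>
      simp only [show (2:ℕ)-1 = 1 by rfl, show q+3-1 = q+2 by rfl]
      rw [g_eq_zero_of_lt _ 2 (q+3) (by omega), g_eq_zero_of_lt _ 1 (q+3) (by omega),
        g_eq_zero_of_lt _ 1 (q+2) (by omega)]
      ring
    | M+3, 1 =>
      have h2 := ih (M+1) (by omega) 1 (by omega) (by omega)
      simp only [show M+3-1 = M+2 by rfl, show M+1-1 = M by rfl, show (1:ℕ)-1 = 0 by rfl,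
        g_zero] at h2 ⊢
      conv_rhs => rw [show M+2 = M+1+1 by rfl, g_succ]
      rw [show M+3 = M+2+1 by rfl, g_succ]
      simp only [show M+2-1 = M+1 by rfl, show M+1-1 = M by rfl, g_zero]
      rw [h2]
      ring
    | M+3, q+2 =>
      have h1 := ih (M+2) (by omega) (q+1) (by omega) (by omega)
      have h2 := ih (M+1) (by omega) (q+2) (by omega) (by omega)
      simp only [show M+3-1 = M+2 by rfl, show M+2-1 = M+1 by rfl, show M+1-1 = M by rfl,
        show (q+2-1 : ℕ) = q+1 by rfl, show (q+1-1 : ℕ) = q by rfl] at h1 h2 ⊢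
      conv_rhs => rw [show M+2 = M+1+1 by rfl, g_succ, g_succ]
      rw [show M+3 = M+2+1 by rfl, g_succ]
      simp only [show M+2-1 = M+1 by rfl, show M+1-1 = M by rfl,
        show (q+1-1:ℕ) = q by rfl, show (q+1+1-1:ℕ) = q+1 by rfl] at *
      rw [h1, h2]
      ring

lemma gE (a : ℕ → ℤ) (n m : ℕ) (hpar : (n + m) % 2 = 0) (hm : 1 ≤ m) :
    g a n m = a 1 * g a n (m-1) + g (fun x => a (x+2)) (n-2) m := by
  match n, m with
  | 0, m =>
    rw [g_eq_zero_of_lt _ 0 m (by omega)]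
    rcases Nat.exists_eq_add_of_le hm with ⟨p, rfl⟩
    rw [g_eq_zero_of_lt _ 0 (1+p) (by omega)]
    rcases Nat.eq_zero_or_pos p with rfl | hp
    · omega
    · rw [g_eq_zero_of_lt a 0 (1+p-1) (by omega)]; ring
  | n+1, m =>
    have h1 := gB1' a (n+1) m hpar hm
    have h2 := gB1 a (n+1) (m-1) (by omega)
    have h3 := gB1 (fun x => a (x+1)) (n+1-1) m (by omega)
    rw [h1, ← h2, h3]
    have he : (fun x => (fun y => a (y+1)) (x+1)) = (fun x => a (x+2)) := by
      funext x; rfl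
    rw [he]
    have : n+1-1-1 = n+1-2 := by omega
    rw [this]

lemma gD0 : ∀ n (a : ℕ → ℤ) (m : ℕ), 1 ≤ m → m ≤ n → (n + m) % 2 = 0 →
    g a n m = ∑ i ∈ Finset.range ((n-m)/2 + 1),
      a (2*i+1) * g (fun x => a (x + 2*i)) (n - 2*i) (m-1) := by
  intro n
  induction n using Nat.strong_induction_on with
  | _ n ih =>
    intro a m hm hmn hpar
    have hE := gE a n m hpar hm
    have h0 : (fun x => a (x + 2*0)) = a := by funext x; norm_num
    by_cases hcase : n < m + 2
    · have hnm : n = m := by omega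
      subst hnm
      rw [show (n-n)/2 + 1 = 1 by omega, Finset.sum_range_one, h0,
        show 2*0+1 = 1 by rfl, show n - 2*0 = n by omega]
      rw [g_eq_zero_of_lt _ (n-2) n (by omega)] at hE
      rw [hE]; ring
    · push_neg at hcase
      have hIH := ih (n-2) (by omega) (fun x => a (x+2)) m hm (by omega) (by omega)
      rw [hE, hIH]
      conv_rhs => rw [show (n-m)/2 + 1 = ((n-2-m)/2 + 1) + 1 by omega,
        Finset.sum_range_succ']
      rw [add_comm, h0, show 2*0+1 = 1 by rfl, show n - 2*0 = n by omega]
      congr 1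
      · apply Finset.sum_congr rfl
        intro i _
        show a (2*i+1+2) * g (fun x => a (x + 2*i + 2)) (n-2-2*i) (m-1) = _
        have e1 : 2*i+1+2 = 2*(i+1)+1 := by omega
        have e2 : (fun x => a (x + 2*i + 2)) = (fun x => a (x + 2*(i+1))) := by
          funext x; congr 1; try omega
        have e3 : n-2-2*i = n - 2*(i+1) := by omega
        rw [e1]
        try rw [e2]
        try rw [e3]

lemma gK' (a : ℕ → ℤ) (n : ℕ) : ∀ b q, b ≤ n → (n + q + 1 + b) % 2 = 0 →
    ∑ j ∈ Finset.range (q+1), (-1:ℤ)^j * g a n (q-j) * g a b j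
      = g (fun x => a (x + b)) (n - b) q := by
  intro b
  induction b using Nat.strong_induction_on with
  | _ b ih =>
    intro q hb hpar
    have ha0 : (fun x => a (x + 0)) = a := by funext x; norm_num
    match b, q with
    | 0, q =>
      rw [Finset.sum_range_succ']
      have hz : ∑ j ∈ Finset.range q,
          (-1:ℤ)^(j+1) * g a n (q-(j+1)) * g a 0 (j+1) = 0 := by
        apply Finset.sum_eq_zero
        intro j _
        rw [g_zero_left]; ring
      rw [hz, ha0, Nat.sub_zero]
      simp
    | 1, 0 => simp
    | 1, p+1 =>
      have h11 : g a 1 1 = a 1 := by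
        rw [show (1:ℕ) = 0+1 by rfl, g_succ]; simp
      rw [Finset.sum_range_succ']
      have hz : ∑ j ∈ Finset.range (p+1),
          (-1:ℤ)^(j+1) * g a n (p+1-(j+1)) * g a 1 (j+1)
          = -(a 1 * g a n p) := by
        rw [Finset.sum_eq_single_of_mem 0 (by simp)]
        · simp [h11]; ring
        · intro j _ hj
          rw [g_eq_zero_of_lt a 1 (j+1) (by omega)]; ring
      rw [hz]
      have h1 := gB1' a n (p+1) (by omega) (by omega)
      have h2 := gB1 a n p (by omega)
      simp only [Nat.add_sub_cancel] at h1
      simp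
      rw [h1, h2]
      ring
    | B+2, 0 => simp
    | B+2, p+1 =>
      rw [Finset.sum_range_succ']
      have hstep : ∀ j ∈ Finset.range (p+1),
          (-1:ℤ)^(j+1) * g a n (p+1-(j+1)) * g a (B+2) (j+1)
          = (-(a (B+2))) * ((-1:ℤ)^j * g a n (p-j) * g a (B+1) j)
            + (-1:ℤ)^(j+1) * g a n (p-j) * g a B (j+1) := by
        intro j _
        rw [show B+2 = B+1+1 by rfl, g_succ]
        simp only [show B+1-1 = B by rfl, Nat.succ_sub_succ]
        ring
      rw [Finset.sum_congr rfl hstep, Finset.sum_add_distrib, ← Finset.mul_sum]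
      have hIH1 := ih (B+1) (by omega) p (by omega) (by omega)
      have hIH2 := ih B (by omega) (p+1) (by omega) (by omega)
      have hs := Finset.sum_range_succ' (fun j => (-1:ℤ)^j * g a n (p+1-j) * g a B j) (p+1)
      simp only [Nat.succ_sub_succ, pow_zero, Nat.sub_zero, one_mul, g_zero, mul_one] at hs
      rw [hIH1]
      have hsecond : ∑ j ∈ Finset.range (p+1), (-1:ℤ)^(j+1) * g a n (p-j) * g a B (j+1)
          = g (fun x => a (x + B)) (n - B) (p+1) - g a n (p+1) := by
        rw [← hIH2, hs]; ring
      rw [hsecond]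
      -- chain
      have e1 : (fun x => (fun y => a (y + B)) (x+1)) = (fun x => a (x + (B+1))) := by
        funext x; show a (x+1+B) = a (x + (B+1)); congr 1; omega
      have e2 : (fun x => (fun y => a (y + (B+1))) (x+1)) = (fun x => a (x + (B+2))) := by
        funext x; show a (x+1+(B+1)) = a (x + (B+2)); congr 1; omega
      have hc1 := gB1 (fun x => a (x + B)) (n-B) (p+1) (by omega)
      rw [e1, show n-B-1 = n-(B+1) by omega] at hc1
      have hc2 := gB1' (fun x => a (x + (B+1))) (n-(B+1)) (p+1) (by omega) (by omega)
      rw [e2, show n-(B+1)-1 = n-(B+2) by omega, Nat.add_sub_cancel] at hc2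
      beta_reduce at hc2
      rw [show 1+(B+1) = B+2 by omega] at hc2
      have hc3 := gB1 (fun x => a (x + (B+1))) (n-(B+1)) p (by omega)
      rw [e2, show n-(B+1)-1 = n-(B+2) by omega] at hc3
      rw [hc1, hc2, hc3]
      simp
      ring

lemma gamma_zero (a : ℕ → ℤ) (n : ℕ) : gamma a n 0 = 1 := by
  simp [gamma]

lemma gamma_empty (a : ℕ → ℤ) (l : ℕ) : gamma a 0 (l+1) = 0 := by
  simp [gamma]

lemma gamma_one_one (a : ℕ → ℤ) : gamma a 1 1 = a 1 := by
  rw [gamma]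
  rw [show (Finset.univ.filter _ : Finset (Fin 1 → Fin 1)) = Finset.univ from by
    apply Finset.filter_true_of_mem; intro t _
    constructor
    · intro i j hij; omega
    · intro i
      have : t i = 0 := by omega
      have : (t i : ℕ) = 0 := by omega
      simp [this]]
  have hone : ∀ t : Fin 1 → Fin 1, ∏ i : Fin 1, a ((t i : ℕ)+1) = a 1 := by
    intro t
    rw [Fin.prod_univ_one]
    have : (t 0 : ℕ) = 0 := by omega
    simp [this]
  rw [Finset.sum_congr rfl (fun t _ => hone t), Finset.sum_const, Finset.card_univ]
  simp

lemma gamma_one_big (a : ℕ → ℤ) (l : ℕ) : gamma a 1 (l+2) = 0 := by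
  rw [gamma]
  apply Finset.sum_eq_zero
  intro t ht
  simp only [Finset.mem_filter] at ht
  exfalso
  have h := ht.2.1 ⟨0, by omega⟩ ⟨1, by omega⟩ (by simp [Fin.lt_def])
  have h0 : (t ⟨0, by omega⟩ : ℕ) < 1 := (t _).isLt
  have h1 : (t ⟨1, by omega⟩ : ℕ) < 1 := (t _).isLt
  rw [Fin.lt_def] at h
  omega

lemma gamma_recA (a : ℕ → ℤ) (n l : ℕ) :
    ∑ t ∈ (Finset.univ.filter (fun t : Fin (l+1) → Fin (n+2) =>
      (∀ i j : Fin (l+1), i < j → t i < t j) ∧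
      (∀ i : Fin (l+1), ((t i : ℕ) + 1 + (l+1)) % 2 = ((n+2) + ((i : ℕ) + 1)) % 2))).filter
      (fun t => t (Fin.last l) = Fin.last (n+1)),
      ∏ i : Fin (l+1), a ((t i : ℕ) + 1)
    = a (n+2) * gamma a (n+1) l := by
  rw [gamma, Finset.mul_sum]
  have key : ∀ t : Fin (l+1) → Fin (n+2),
      (∀ i j : Fin (l+1), i < j → t i < t j) → t (Fin.last l) = Fin.last (n+1) →
      ∀ i : Fin l, (t i.castSucc : ℕ) < n+1 := by
    intro t hmono hlast i
    have h := hmono i.castSucc (Fin.last l) (Fin.castSucc_lt_last i)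
    rw [hlast, Fin.lt_def] at h
    simpa using h
  refine Finset.sum_nbij'
    (fun t (i : Fin l) => (⟨min ((t i.castSucc : ℕ)) n, by omega⟩ : Fin (n+1)))
    (fun s => Fin.snoc (fun i => Fin.castSucc (s i)) (Fin.last (n+1)))
    ?_ ?_ ?_ ?_ ?_
  · intro t ht
    rw [Finset.mem_filter] at ht
    obtain ⟨ht1, hlast⟩ := ht
    rw [Finset.mem_filter] at ht1
    obtain ⟨-, hmono, hpar⟩ := ht1
    have hlt := key t hmono hlast
    refine Finset.mem_filter.mpr ⟨Finset.mem_univ _, ?_, ?_⟩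
    · intro i j hij
      have h := hmono i.castSucc j.castSucc (by rwa [Fin.castSucc_lt_castSucc_iff])
      rw [Fin.lt_def] at h ⊢
      have hi := hlt i
      have hj := hlt j
      simp only [Fin.coe_castSucc] at *
      omega
    · intro i
      have hp := hpar i.castSucc
      have hi := hlt i
      simp only [Fin.coe_castSucc] at *
      omega
  · intro s hs
    rw [Finset.mem_filter] at hs
    obtain ⟨-, hmono, hpar⟩ := hs
    refine Finset.mem_filter.mpr ⟨Finset.mem_filter.mpr ⟨Finset.mem_univ _, ?_, ?_⟩, ?_⟩
    · intro i j hij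
      rcases Fin.eq_castSucc_or_eq_last j with ⟨j', rfl⟩ | rfl
      · rcases Fin.eq_castSucc_or_eq_last i with ⟨i', rfl⟩ | rfl
        · simp only [Fin.snoc_castSucc]
          rw [Fin.castSucc_lt_castSucc_iff] at hij ⊢
          exact hmono _ _ hij
        · exact absurd (lt_trans hij (Fin.castSucc_lt_last j')) (lt_irrefl _)
      · rcases Fin.eq_castSucc_or_eq_last i with ⟨i', rfl⟩ | rfl
        · simp only [Fin.snoc_castSucc, Fin.snoc_last]
          exact Fin.castSucc_lt_last (s i')
        · exact absurd hij (lt_irrefl _)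
    · intro i
      rcases Fin.eq_castSucc_or_eq_last i with ⟨i', rfl⟩ | rfl
      · simp only [Fin.snoc_castSucc]
        have hp := hpar i'
        simp only [Fin.coe_castSucc] at *
        omega
      · simp only [Fin.snoc_last]
        simp only [Fin.val_last]
        try omega
    · exact Fin.snoc_last _ _
  · intro t ht
    rw [Finset.mem_filter] at ht
    obtain ⟨ht1, hlast⟩ := ht
    rw [Finset.mem_filter] at ht1
    obtain ⟨-, hmono, hpar⟩ := ht1
    have hlt := key t hmono hlast
    funext i
    rcases Fin.eq_castSucc_or_eq_last i with ⟨i', rfl⟩ | rfl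
    · simp only [Fin.snoc_castSucc]
      apply Fin.ext
      simp only [Fin.coe_castSucc]
      exact min_eq_left (by have := hlt i'; omega)
    · simp only [Fin.snoc_last]
      rw [hlast]
  · intro s hs
    funext i'
    apply Fin.ext
    simp only [Fin.snoc_castSucc, Fin.coe_castSucc]
    exact min_eq_left (by have := (s i').isLt; omega)
  · intro t ht
    rw [Finset.mem_filter] at ht
    obtain ⟨ht1, hlast⟩ := ht
    rw [Finset.mem_filter] at ht1
    obtain ⟨-, hmono, hpar⟩ := ht1
    have hlt := key t hmono hlast
    rw [Fin.prod_univ_castSucc (fun i : Fin (l+1) => a ((t i : ℕ)+1))]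
    rw [hlast]
    simp only [Fin.val_last]
    rw [mul_comm]
    congr 1
    apply Finset.prod_congr rfl
    intro i _
    congr 2
    exact (min_eq_left (by have := hlt i; omega)).symm

lemma gamma_recB (a : ℕ → ℤ) (n l : ℕ) :
    ∑ t ∈ (Finset.univ.filter (fun t : Fin (l+1) → Fin (n+3) =>
      (∀ i j : Fin (l+1), i < j → t i < t j) ∧
      (∀ i : Fin (l+1), ((t i : ℕ) + 1 + (l+1)) % 2 = ((n+3) + ((i : ℕ) + 1)) % 2))).filter
      (fun t => ¬ (t (Fin.last l) = Fin.last (n+2))),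
      ∏ i : Fin (l+1), a ((t i : ℕ) + 1)
    = gamma a (n+1) (l+1) := by
  rw [gamma]
  have key : ∀ t : Fin (l+1) → Fin (n+3),
      (∀ i j : Fin (l+1), i < j → t i < t j) →
      (∀ i : Fin (l+1), ((t i : ℕ) + 1 + (l+1)) % 2 = ((n+3) + ((i : ℕ) + 1)) % 2) →
      ¬ (t (Fin.last l) = Fin.last (n+2)) →
      ∀ i : Fin (l+1), (t i : ℕ) ≤ n := by
    intro t hmono hpar hne i
    have hv : (t (Fin.last l) : ℕ) ≤ n := by
      have hp := hpar (Fin.last l)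
      have hlt : (t (Fin.last l) : ℕ) < n+3 := (t _).isLt
      have hne' : (t (Fin.last l) : ℕ) ≠ n+2 := by
        intro h; exact hne (Fin.ext (by simp [h]))
      simp only [Fin.val_last] at hp
      omega
    rcases eq_or_lt_of_le (Fin.le_last i) with h | h
    · rw [h]; exact hv
    · have := hmono i (Fin.last l) h
      rw [Fin.lt_def] at this
      omega
  refine Finset.sum_nbij'
    (fun t (i : Fin (l+1)) => (⟨min ((t i : ℕ)) n, by omega⟩ : Fin (n+1)))
    (fun s (i : Fin (l+1)) => (⟨(s i : ℕ), by omega⟩ : Fin (n+3)))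
    ?_ ?_ ?_ ?_ ?_
  · intro t ht
    rw [Finset.mem_filter] at ht
    obtain ⟨ht1, hne⟩ := ht
    rw [Finset.mem_filter] at ht1
    obtain ⟨-, hmono, hpar⟩ := ht1
    have hle := key t hmono hpar hne
    refine Finset.mem_filter.mpr ⟨Finset.mem_univ _, ?_, ?_⟩
    · intro i j hij
      have h := hmono i j hij
      rw [Fin.lt_def] at h ⊢
      have := hle i; have := hle j
      simp only at *
      omega
    · intro i
      have hp := hpar i
      have := hle i
      simp only at *
      omega
  · intro s hs
    rw [Finset.mem_filter] at hs
    obtain ⟨-, hmono, hpar⟩ := hs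
    refine Finset.mem_filter.mpr ⟨Finset.mem_filter.mpr ⟨Finset.mem_univ _, ?_, ?_⟩, ?_⟩
    · intro i j hij
      have h := hmono i j hij
      rw [Fin.lt_def] at h ⊢
      simpa using h
    · intro i
      have hp := hpar i
      simp only at *
      omega
    · intro h
      rw [Fin.ext_iff] at h
      simp only [Fin.val_last] at h
      have := (s (Fin.last l)).isLt
      omega
  · intro t ht
    rw [Finset.mem_filter] at ht
    obtain ⟨ht1, hne⟩ := ht
    rw [Finset.mem_filter] at ht1
    obtain ⟨-, hmono, hpar⟩ := ht1
    have hle := key t hmono hpar hne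
    funext i
    apply Fin.ext
    simp only
    exact min_eq_left (hle i)
  · intro s hs
    funext i
    apply Fin.ext
    simp only
    exact min_eq_left (by have := (s i).isLt; omega)
  · intro t ht
    rw [Finset.mem_filter] at ht
    obtain ⟨ht1, hne⟩ := ht
    rw [Finset.mem_filter] at ht1
    obtain ⟨-, hmono, hpar⟩ := ht1
    have hle := key t hmono hpar hne
    apply Finset.prod_congr rfl
    intro i _
    congr 2
    exact (min_eq_left (hle i)).symm

lemma gamma_empty' (a : ℕ → ℤ) (l : ℕ) : gamma a 0 (l+1) = 0 := by simp [gamma]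

lemma gamma_rec (a : ℕ → ℤ) (n l : ℕ) :
    gamma a (n+2) (l+1) = a (n+2) * gamma a (n+1) l + gamma a n (l+1) := by
  conv_lhs => rw [gamma]
  rw [← Finset.sum_filter_add_sum_filter_not
    (Finset.univ.filter (fun t : Fin (l+1) → Fin (n+2) =>
      (∀ i j : Fin (l+1), i < j → t i < t j) ∧
      (∀ i : Fin (l+1), ((t i : ℕ) + 1 + (l+1)) % 2 = ((n+2) + ((i : ℕ) + 1)) % 2)))
    (fun t => t (Fin.last l) = Fin.last (n+1))]
  rw [gamma_recA]
  congr 1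
  match n with
  | 0 =>
    rw [gamma_empty']
    apply Finset.sum_eq_zero
    intro t ht
    exfalso
    rw [Finset.mem_filter] at ht
    obtain ⟨ht1, hne⟩ := ht
    rw [Finset.mem_filter] at ht1
    obtain ⟨-, hmono, hpar⟩ := ht1
    have hp := hpar (Fin.last l)
    have hlt : (t (Fin.last l) : ℕ) < 2 := (t _).isLt
    have hne' : (t (Fin.last l) : ℕ) ≠ 1 := by
      intro h; exact hne (Fin.ext (by simp [h]))
    simp only [Fin.val_last] at hp
    omega
  | n+1 => exact gamma_recB a n l

lemma gamma_eq_g (a : ℕ → ℤ) : ∀ n l, gamma a n l = g a n l := by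
  intro n
  induction n using Nat.strong_induction_on with
  | _ n ih =>
    intro l
    match n, l with
    | n, 0 => rw [gamma_zero, g_zero]
    | 0, l+1 => rw [gamma_empty, g_zero_left]
    | 1, 1 =>
      rw [gamma_one_one, show (1:ℕ) = 0+1 from rfl, g_succ]; simp
    | 1, l+2 =>
      rw [gamma_one_big, show (1:ℕ) = 0+1 from rfl, g_succ]; simp
    | n+2, l+1 =>
      rw [gamma_rec, ih (n+1) (by omega) l, ih n (by omega) (l+1),
        show n+2 = (n+1)+1 from rfl, g_succ]
      simp only [Nat.add_sub_cancel]

lemma gK (a : ℕ → ℤ) (n b q : ℕ) (hb : b ≤ n) (hpar : (n + q + 1 + b) % 2 = 0) :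
    ∑ j ∈ Finset.range (min q b + 1), (-1:ℤ)^j * g a n (q-j) * g a b j
      = g (fun x => a (x + b)) (n - b) q := by
  rw [← gK' a n b q hb hpar]
  apply Finset.sum_subset
  · apply Finset.range_subset_range.mpr; omega
  · intro j hj hnj
    simp only [Finset.mem_range] at hj hnj
    rw [g_eq_zero_of_lt a b j (by omega)]
    ring

theorem stmt9 (a : ℕ → ℤ) (ha : ∀ i, 0 < a i) (k : ℕ) (n : ℕ) (hnk : n = 2 * k)
    (m : ℕ) (hm1 : 1 ≤ m) (hmn : m ≤ n) :
    gamma a n m =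
      ∑ i ∈ Finset.Icc (m % 2) ((n - m + m % 2) / 2),
        a (2 * i + 1 - m % 2) * GammaBig a n m i := by
  have hgam : ∀ i ∈ Finset.Icc (m % 2) ((n - m + m % 2) / 2),
      a (2*i + 1 - m % 2) * GammaBig a n m i
        = a (2*i + 1 - m % 2) *
            g (fun x => a (x + (2*i - m % 2))) (n - (2*i - m % 2)) (m-1) := by
    intro i hi
    rw [Finset.mem_Icc] at hi
    congr 1
    rw [GammaBig]
    simp only [gamma_eq_g]
    exact gK a n (2*i - m % 2) (m-1) (by omega) (by omega)
  rw [Finset.sum_congr rfl hgam, gamma_eq_g]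
  have hr : m % 2 = 0 ∨ m % 2 = 1 := by omega
  rcases hr with hr | hr
  · simp only [hr, Nat.add_zero, Nat.sub_zero]
    rw [gD0 n a m hm1 hmn (by omega),
      show Finset.Icc 0 ((n-m)/2) = Finset.range ((n-m)/2+1) from by ext x; simp]
  · simp only [hr]
    rw [gB1 a n m (by omega), gD0 (n-1) (fun x => a (x+1)) m hm1 (by omega) (by omega)]
    refine Finset.sum_nbij' (fun i => i+1) (fun i => i-1) ?_ ?_ ?_ ?_ ?_
    · intro i hi
      simp only [Finset.mem_range] at hi
      simp only [Finset.mem_Icc]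
      omega
    · intro i hi
      simp only [Finset.mem_Icc] at hi
      simp only [Finset.mem_range]
      omega
    · intro i _; show i+1-1 = i; omega
    · intro i hi; simp only [Finset.mem_Icc] at hi; show i-1+1 = i; omega
    · intro i hi
      simp only [Finset.mem_range] at hi
      show a (2*i+1+1) * g (fun x => a (x + 2*i + 1)) (n-1-2*i) (m-1)
        = a (2*(i+1)+1-1) * g (fun x => a (x + (2*(i+1)-1))) (n - (2*(i+1)-1)) (m-1)
      have e1 : 2*i+1+1 = 2*(i+1)+1-1 := by omega
      have e2 : (fun x => a (x + 2*i + 1)) = (fun x => a (x + (2*(i+1) - 1))) := by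
        funext x; congr 1; try omega
      have e3 : n-1-2*i = n - (2*(i+1) - 1) := by omega
      rw [e1]
      try rw [e2]
      try rw [e3]
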